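/- The Jordan algebra M₂(F)^(+) decomposes as a direct sum of vector spaces M₂(F)^(+) = H₂(F) ⊕ F·e₁₂, where H₂(F) = span(e₁₁, e₂₂, e₁₂+e₂₁), and both summands are subalgebras of M₂(F)^(+). Consequently, the operator S defined by S = 0 on H₂(F) and S(e₁₂) = −e₁₂ is a Rota–Baxter operator of weight 1 on M₂(F)^(+). -/

import Mathlib

def E (F : Type*) [Field F] (i j : Fin 2) : Matrix (Fin 2) (Fin 2) F :=
  Matrix.single i j 1

/-- The Jordan product on `M₂(F)`. -/
def jmul {F : Type*} [Field F] (a b : Matrix (Fin 2) (Fin 2) F) : Matrix (Fin 2) (Fin 2) F :=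
  (2 : F)⁻¹ • (a * b + b * a)

/-!
Symmetric matrices are closed under the Jordan product, since `(ab + ba)ᵀ = bᵀaᵀ + aᵀbᵀ`, and
in size two they are exactly `span(e₁₁, e₂₂, e₁₂ + e₂₁)`; the line `F·e₁₂` squares to zero, and
`x = (x - (x₁₂ - x₂₁) e₁₂) + (x₁₂ - x₂₁) e₁₂` splits any matrix. For any splitting `A = A₁ + A₂`
into subalgebras, the operator `S = 0` on `A₁`, `S = -id` on `A₂` is Rota–Baxter of weight 1:
writing `x = x₁ + x₂`, `y = y₁ + y₂`, one gets `S x ∘ y + x ∘ S y + x ∘ y = x₁ ∘ y₁ - x₂ ∘ y₂`,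
which `S` sends to `x₂ ∘ y₂ = S x ∘ S y`.
-/

section RotaBaxter

variable {R M : Type*} [CommRing R] [AddCommGroup M] [Module R M]

theorem rotaBaxter_of_sup_eq_top (μ : M →ₗ[R] M →ₗ[R] M) {p q : Submodule R M}
    (hpq : p ⊔ q = ⊤) (hp : ∀ a ∈ p, ∀ b ∈ p, μ a b ∈ p) (hq : ∀ a ∈ q, ∀ b ∈ q, μ a b ∈ q)
    (S : M →ₗ[R] M) (hSp : ∀ a ∈ p, S a = 0) (hSq : ∀ b ∈ q, S b = -b) (x y : M) :
    μ (S x) (S y) = S (μ (S x) y + μ x (S y) + μ x y) := by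
  obtain ⟨a, ha, b, hb, rfl⟩ := Submodule.mem_sup.1 (hpq ▸ Submodule.mem_top : x ∈ p ⊔ q)
  obtain ⟨c, hc, d, hd, rfl⟩ := Submodule.mem_sup.1 (hpq ▸ Submodule.mem_top : y ∈ p ⊔ q)
  have hSx : S (a + b) = -b := by rw [map_add, hSp a ha, hSq b hb, zero_add]
  have hSy : S (c + d) = -d := by rw [map_add, hSp c hc, hSq d hd, zero_add]
  have hsum : μ (-b) (c + d) + μ (a + b) (-d) + μ (a + b) (c + d) = μ a c - μ b d := by
    simp only [map_add, map_neg, LinearMap.add_apply, LinearMap.neg_apply]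
    abel
  rw [hSx, hSy, hsum, map_sub, hSp _ (hp a ha c hc), hSq _ (hq b hb d hd)]
  simp

end RotaBaxter

namespace Matrix

variable (R : Type*) [CommRing R]

def symmetricMatrices (n : Type*) : Submodule R (Matrix n n R) where
  carrier := {A | A.IsSymm}
  add_mem' := IsSymm.add
  zero_mem' := isSymm_zero
  smul_mem' c _ h := h.smul c

variable {R}

@[simp]
theorem mem_symmetricMatrices {n : Type*} {A : Matrix n n R} :
    A ∈ symmetricMatrices R n ↔ A.IsSymm :=
  Iff.rfl

theorem isSymm_iff_fin_two {α : Type*} {A : Matrix (Fin 2) (Fin 2) α} :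
    A.IsSymm ↔ A 0 1 = A 1 0 := by
  rw [IsSymm.ext_iff]
  constructor
  · intro h; exact h 1 0
  · intro h i j; fin_cases i <;> fin_cases j <;> simp [h]

end Matrix

section JordanSplitting

open Matrix

variable {F : Type*} [Field F]

theorem Matrix.IsSymm.jmul {a b : Matrix (Fin 2) (Fin 2) F} (ha : a.IsSymm) (hb : b.IsSymm) :
    (jmul a b).IsSymm := by
  rw [IsSymm, _root_.jmul, transpose_smul, transpose_add, transpose_mul, transpose_mul, ha.eq,
    hb.eq, add_comm]

theorem span_E_eq_symmetricMatrices :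
    Submodule.span F {E F 0 0, E F 1 1, E F 0 1 + E F 1 0} = symmetricMatrices F (Fin 2) := by
  refine le_antisymm (Submodule.span_le.2 ?_) fun m hm => ?_
  · rintro _ (rfl | rfl | rfl) <;> simp [isSymm_iff_fin_two, E]
  · have hm : m 0 1 = m 1 0 := isSymm_iff_fin_two.1 hm
    have : m = m 0 0 • E F 0 0 + m 1 1 • E F 1 1 + m 1 0 • (E F 0 1 + E F 1 0) := by
      ext i j
      fin_cases i <;> fin_cases j <;> simp [E, hm]
    rw [this]
    refine Submodule.add_mem _ (Submodule.add_mem _ ?_ ?_) ?_ <;>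
      exact Submodule.smul_mem _ _ (Submodule.subset_span (by simp))

theorem symmetricMatrices_sup_span_E_zero_one :
    symmetricMatrices F (Fin 2) ⊔ Submodule.span F {E F 0 1} = ⊤ := by
  refine eq_top_iff.2 fun x _ => ?_
  have hx : x = (x - (x 0 1 - x 1 0) • E F 0 1) + (x 0 1 - x 1 0) • E F 0 1 := by simp
  rw [hx]
  refine Submodule.add_mem_sup ?_ (Submodule.smul_mem _ _ (Submodule.mem_span_singleton_self _))
  simp [isSymm_iff_fin_two, E]

theorem symmetricMatrices_inf_span_E_zero_one :
    symmetricMatrices F (Fin 2) ⊓ Submodule.span F {E F 0 1} = ⊥ := by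
  refine eq_bot_iff.2 fun m hm => ?_
  obtain ⟨hmS, hmB⟩ := Submodule.mem_inf.1 hm
  obtain ⟨c, rfl⟩ := Submodule.mem_span_singleton.1 hmB
  simp_all [isSymm_iff_fin_two, E]

theorem jmul_eq_zero_of_mem_span_E_zero_one {a b : Matrix (Fin 2) (Fin 2) F}
    (ha : a ∈ Submodule.span F {E F 0 1}) (hb : b ∈ Submodule.span F {E F 0 1}) :
    jmul a b = 0 := by
  obtain ⟨c, rfl⟩ := Submodule.mem_span_singleton.1 ha
  obtain ⟨d, rfl⟩ := Submodule.mem_span_singleton.1 hb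
  simp [jmul, E, single_mul_single_of_ne]

variable (F) in
def jmulₗ :
    Matrix (Fin 2) (Fin 2) F →ₗ[F] Matrix (Fin 2) (Fin 2) F →ₗ[F] Matrix (Fin 2) (Fin 2) F :=
  (2 : F)⁻¹ • (LinearMap.mul F _ + (LinearMap.mul F _).flip)

end JordanSplitting

theorem splitting_decomposition_H2 {F : Type*} [Field F]
    (H : Submodule F (Matrix (Fin 2) (Fin 2) F))
    (hH : H = Submodule.span F {E F 0 0, E F 1 1, E F 0 1 + E F 1 0})
    (B : Submodule F (Matrix (Fin 2) (Fin 2) F))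
    (hB : B = Submodule.span F {E F 0 1})
    (S : Matrix (Fin 2) (Fin 2) F →ₗ[F] Matrix (Fin 2) (Fin 2) F)
    (hS0 : ∀ a ∈ H, S a = 0) (hS1 : S (E F 0 1) = -E F 0 1) :
    H ⊔ B = ⊤ ∧ H ⊓ B = ⊥ ∧
    (∀ a ∈ H, ∀ b ∈ H, jmul a b ∈ H) ∧ (∀ a ∈ B, ∀ b ∈ B, jmul a b ∈ B) ∧
    (∀ x y : Matrix (Fin 2) (Fin 2) F,
      jmul (S x) (S y) = S (jmul (S x) y + jmul x (S y) + jmul x y)) := by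
  have hHS : H = Matrix.symmetricMatrices F (Fin 2) := hH.trans span_E_eq_symmetricMatrices
  have hsup : H ⊔ B = ⊤ := hHS ▸ hB ▸ symmetricMatrices_sup_span_E_zero_one
  have hHmul : ∀ a ∈ H, ∀ b ∈ H, jmul a b ∈ H := hHS ▸ fun _ ha _ hb => ha.jmul hb
  have hBmul : ∀ a ∈ B, ∀ b ∈ B, jmul a b ∈ B := hB ▸ fun _ ha _ hb =>
    jmul_eq_zero_of_mem_span_E_zero_one ha hb ▸ Submodule.zero_mem _
  have hSB : ∀ b ∈ B, S b = -b := hB ▸ fun b hb => by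
    obtain ⟨c, rfl⟩ := Submodule.mem_span_singleton.1 hb
    rw [map_smul, hS1, smul_neg]
  exact ⟨hsup, hHS ▸ hB ▸ symmetricMatrices_inf_span_E_zero_one, hHmul, hBmul,
    rotaBaxter_of_sup_eq_top (jmulₗ F) hsup hHmul hBmul S hS0 hSB⟩
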